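/- arXiv:2307.06759 — 6 statements merged into one kernel-verified Lean document; each statement's English description precedes it below -/
import Mathlib

section
/- Let ω be a control on the discrete simplex of the uniform partition of [0,T], let (ℬ, |·|) be a Banach space, let μ > 1, and let R : 𝒮₂(⟦0,T⟧) → ℬ satisfy |R_{t_k t_{k+1}}| ≤ ω(t_k, t_{k+1})^μ for every k = 0,…,n−1 and |δR_{sut}| = |R_{st} − R_{su} − R_{ut}| ≤ ω(s,t)^μ for all grid points s ≤ u ≤ t. Then |R_{st}| ≤ K_μ · ω(s,t)^μ for all grid points s ≤ t, where K_μ = 2^μ ∑_{l=1}^∞ l^{−μ}. -/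
/-!
Young's point-removal argument. Index everything by grid positions, so that `ω` becomes a
superadditive function on pairs `i ≤ j ≤ n`. In a partition of `[i, j]` with `r ≥ 1` interior
points, the sums `∑ₐ ω(c a, c (a + 2))` are at most `2 ω(i, j)` by superadditivity, so some
interior point has `ω(c a, c (a + 2)) ≤ min 1 (2 / r) * ω(i, j)`; deleting it changes the
Riemann sum `∑ R(c b, c (b + 1))` by one `δR`, hence by at most `(min 1 (2 / r))^μ ω(i, j)^μ`.
Deleting all interior points of the grid partition one by one compares `R(i, j)` with the sum of
the one-step increments, whose norm is at most `ω(i, j)^μ` because `x ↦ x^μ` is superadditive.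
The weights sum to at most `2^μ ∑ l^(-μ)` since `μ > 1`.
-/

open Finset

theorem Real.sum_rpow_le_rpow_sum {ι : Type*} (s : Finset ι) {f : ι → ℝ}
    (hf : ∀ i ∈ s, 0 ≤ f i) {p : ℝ} (hp : 1 ≤ p) :
    ∑ i ∈ s, f i ^ p ≤ (∑ i ∈ s, f i) ^ p := by
  induction s using cons_induction with
  | empty => simp [Real.zero_rpow (by positivity : p ≠ 0)]
  | cons i s _ ih =>
    simp only [sum_cons, forall_mem_cons] at hf ⊢
    calc f i ^ p + ∑ j ∈ s, f j ^ p ≤ f i ^ p + (∑ j ∈ s, f j) ^ p := by gcongr; exact ih hf.2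
      _ ≤ (f i + ∑ j ∈ s, f j) ^ p :=
        Real.add_rpow_le_rpow_add hf.1 (sum_nonneg hf.2) hp

namespace Nat

def succAbove (p b : ℕ) : ℕ := if b < p then b else b + 1

lemma succAbove_of_lt {p b : ℕ} (h : b < p) : succAbove p b = b := if_pos h

lemma succAbove_of_le {p b : ℕ} (h : p ≤ b) : succAbove p b = b + 1 := if_neg h.not_gt

lemma monotone_succAbove (p : ℕ) : Monotone (succAbove p) := by
  intro a b hab
  unfold succAbove
  split_ifs <;> omega

end Nat

lemma sum_range_eq_sum_succAbove_sub {M : Type*} [AddCommGroup M] (f : ℕ → ℕ → M)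
    (c : ℕ → ℕ) {a r : ℕ} (har : a ≤ r) :
    ∑ b ∈ range (r + 2), f (c b) (c (b + 1)) =
      ∑ b ∈ range (r + 1), f (c (Nat.succAbove (a + 1) b)) (c (Nat.succAbove (a + 1) (b + 1))) -
        (f (c a) (c (a + 2)) - f (c a) (c (a + 1)) - f (c (a + 1)) (c (a + 2))) := by
  obtain ⟨k, rfl⟩ := Nat.exists_eq_add_of_le har
  have hhead : ∑ b ∈ range a, f (c (Nat.succAbove (a + 1) b)) (c (Nat.succAbove (a + 1) (b + 1)))
      = ∑ b ∈ range a, f (c b) (c (b + 1)) :=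
    sum_congr rfl fun b hb => by
      have hb := mem_range.mp hb
      rw [Nat.succAbove_of_lt (by omega), Nat.succAbove_of_lt (by omega)]
  have htail : ∑ x ∈ range k,
        f (c (Nat.succAbove (a + 1) (a + 1 + x))) (c (Nat.succAbove (a + 1) (a + 1 + x + 1)))
      = ∑ x ∈ range k, f (c (a + 2 + x)) (c (a + 2 + x + 1)) :=
    sum_congr rfl fun x _ => by
      rw [Nat.succAbove_of_le (by omega), Nat.succAbove_of_le (by omega)]
      ring_nf
  rw [show a + k + 2 = a + 2 + k by omega, show a + k + 1 = a + 1 + k by omega,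
    sum_range_add _ (a + 2), sum_range_add _ (a + 1), sum_range_succ _ (a + 1), sum_range_succ _ a,
    sum_range_succ _ a, hhead, htail, Nat.succAbove_of_lt (Nat.lt_succ_self a),
    Nat.succAbove_of_le le_rfl]
  abel

structure IsDiscreteControl (n : ℕ) (ω : ℕ → ℕ → ℝ) : Prop where
  nonneg : ∀ i j, i ≤ j → j ≤ n → 0 ≤ ω i j
  superadditive : ∀ i j k, i ≤ j → j ≤ k → k ≤ n → ω i j + ω j k ≤ ω i k

namespace IsDiscreteControl

variable {n : ℕ} {ω : ℕ → ℕ → ℝ}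

lemma mono (hω : IsDiscreteControl n ω) {i i' j j' : ℕ} (hi : i' ≤ i) (hij : i ≤ j)
    (hj : j ≤ j') (hj' : j' ≤ n) : ω i j ≤ ω i' j' := by
  have := hω.superadditive i' i j' hi (hij.trans hj) hj'
  have := hω.superadditive i j j' hij hj hj'
  have := hω.nonneg i' i hi (by omega)
  have := hω.nonneg j j' hj hj'
  linarith

lemma sum_le (hω : IsDiscreteControl n ω) {c : ℕ → ℕ} (hc : Monotone c) {r : ℕ}
    (hr : c r ≤ n) : ∑ a ∈ range r, ω (c a) (c (a + 1)) ≤ ω (c 0) (c r) := by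
  induction r with
  | zero => simpa using hω.nonneg _ _ le_rfl hr
  | succ r ih =>
    rw [sum_range_succ]
    have := ih ((hc r.le_succ).trans hr)
    have := hω.superadditive _ _ _ (hc r.zero_le) (hc r.le_succ) hr
    linarith

lemma sum_skip_le (hω : IsDiscreteControl n ω) {c : ℕ → ℕ} (hc : Monotone c) {r : ℕ}
    (hr : c (r + 1) ≤ n) :
    ∑ a ∈ range r, ω (c a) (c (a + 2)) ≤ ω (c 0) (c (r + 1)) + ω (c 0) (c r) := by
  induction r with
  | zero =>
    have := hω.nonneg _ _ (hc (Nat.zero_le 1)) hr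
    have := hω.nonneg _ _ le_rfl ((hc (Nat.zero_le 1)).trans hr)
    simp only [range_zero, sum_empty]
    linarith
  | succ r ih =>
    rw [sum_range_succ]
    have := ih ((hc r.succ.le_succ).trans hr)
    have := hω.superadditive _ _ _ (hc r.zero_le) (hc (by omega : r ≤ r + 2)) hr
    linarith

lemma exists_skip_le (hω : IsDiscreteControl n ω) {c : ℕ → ℕ} (hc : Monotone c) {r : ℕ}
    (hr : c (r + 2) ≤ n) :
    ∃ a ≤ r, ω (c a) (c (a + 2)) ≤ min 1 (2 / ((r : ℝ) + 1)) * ω (c 0) (c (r + 2)) := by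
  set W := ω (c 0) (c (r + 2))
  have hpos : (0 : ℝ) < r + 1 := by positivity
  have hsum : ∑ a ∈ range (r + 1), ω (c a) (c (a + 2)) ≤ ∑ _a ∈ range (r + 1), 2 / (r + 1) * W := by
    have := hω.sum_skip_le hc hr
    have := hω.mono le_rfl (hc (r + 1).zero_le) (hc (r + 1).le_succ) hr
    rw [sum_const, card_range, nsmul_eq_mul]
    push_cast
    rw [← mul_assoc, mul_div_cancel₀ _ hpos.ne']
    linarith
  obtain ⟨a, ha, hle⟩ := exists_le_of_sum_le nonempty_range_add_one hsum
  have ha : a ≤ r := Nat.lt_succ_iff.mp (mem_range.mp ha)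
  refine ⟨a, ha, ?_⟩
  rw [min_mul_of_nonneg _ _ (hω.nonneg _ _ (hc (r + 2).zero_le) hr), one_mul]
  exact le_min (hω.mono (hc a.zero_le) (hc (by omega)) (hc (by omega)) hr) hle

end IsDiscreteControl

/-- The cost factor of removing a point from a partition with `l + 1` interior points. -/
noncomputable def sewingWeight (μ : ℝ) (l : ℕ) : ℝ := min 1 (2 / ((l : ℝ) + 1)) ^ μ

lemma sewingWeight_zero (μ : ℝ) : sewingWeight μ 0 = 1 := by
  norm_num [sewingWeight]

lemma sewingWeight_nonneg (μ : ℝ) (l : ℕ) : 0 ≤ sewingWeight μ l :=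
  Real.rpow_nonneg (le_min zero_le_one (by positivity)) μ

lemma sewingWeight_le {μ : ℝ} (hμ : 0 ≤ μ) (l : ℕ) :
    sewingWeight μ l ≤ 2 ^ μ * ((l : ℝ) + 1) ^ (-μ) := by
  rw [Real.rpow_neg (by positivity), ← div_eq_mul_inv, ← Real.div_rpow zero_le_two (by positivity)]
  exact Real.rpow_le_rpow (le_min zero_le_one (by positivity)) (min_le_right _ _) hμ

lemma one_add_sum_sewingWeight_le {μ : ℝ} (hμ : 1 < μ) (r : ℕ) :
    1 + ∑ l ∈ range r, sewingWeight μ l ≤ 2 ^ μ * ∑' l : ℕ, ((l : ℝ) + 1) ^ (-μ) := by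
  have hsummable : Summable fun l : ℕ => ((l : ℝ) + 1) ^ (-μ) := by
    simpa using (summable_nat_add_iff 1).mpr (Real.summable_nat_rpow.mpr (by linarith))
  have htwo : (2 : ℝ) ≤ 2 ^ μ := by
    simpa using Real.rpow_le_rpow_of_exponent_le one_le_two hμ.le
  calc 1 + ∑ l ∈ range r, sewingWeight μ l
      ≤ 1 + ∑ l ∈ range (r + 1), sewingWeight μ l := by
        grw [sum_range_succ, ← le_add_of_nonneg_right (sewingWeight_nonneg μ r)]
    _ = 2 + ∑ l ∈ range r, sewingWeight μ (l + 1) := by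
        rw [sum_range_succ', sewingWeight_zero]; ring
    _ ≤ 2 ^ μ + ∑ l ∈ range r, 2 ^ μ * (((l + 1 : ℕ) : ℝ) + 1) ^ (-μ) := by
        gcongr with l
        exact sewingWeight_le (by linarith) (l + 1)
    _ = 2 ^ μ * ∑ l ∈ range (r + 1), ((l : ℝ) + 1) ^ (-μ) := by
        rw [sum_range_succ', mul_add, mul_sum, add_comm]; norm_num
    _ ≤ 2 ^ μ * ∑' l : ℕ, ((l : ℝ) + 1) ^ (-μ) := by
        gcongr
        exact hsummable.sum_le_tsum _ fun l _ => by positivity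

section Sewing

variable {E : Type*} [SeminormedAddCommGroup E] {n : ℕ} {ω : ℕ → ℕ → ℝ} {R : ℕ → ℕ → E}
  {μ : ℝ}

theorem norm_sub_sum_le_of_isDiscreteControl (hω : IsDiscreteControl n ω) (hμ : 0 ≤ μ)
    (hδ : ∀ i j k, i ≤ j → j ≤ k → k ≤ n → ‖R i k - R i j - R j k‖ ≤ ω i k ^ μ)
    (r : ℕ) {c : ℕ → ℕ} (hc : Monotone c) (hr : c (r + 1) ≤ n) :
    ‖R (c 0) (c (r + 1)) - ∑ b ∈ range (r + 1), R (c b) (c (b + 1))‖ ≤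
      (∑ l ∈ range r, sewingWeight μ l) * ω (c 0) (c (r + 1)) ^ μ := by
  induction r generalizing c with
  | zero => simp
  | succ r ih =>
    obtain ⟨a, har, hskip⟩ := hω.exists_skip_le hc hr
    have hremove : ‖R (c a) (c (a + 2)) - R (c a) (c (a + 1)) - R (c (a + 1)) (c (a + 2))‖ ≤
        sewingWeight μ r * ω (c 0) (c (r + 2)) ^ μ := by
      have hW := hω.nonneg _ _ (hc (Nat.zero_le _)) hr
      calc _ ≤ ω (c a) (c (a + 2)) ^ μ :=
            hδ _ _ _ (hc a.le_succ) (hc (a + 1).le_succ) ((hc (by omega)).trans hr)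
        _ ≤ (min 1 (2 / ((r : ℝ) + 1)) * ω (c 0) (c (r + 2))) ^ μ :=
            Real.rpow_le_rpow (hω.nonneg _ _ (hc (by omega)) ((hc (by omega)).trans hr)) hskip hμ
        _ = _ := Real.mul_rpow (le_min zero_le_one (by positivity)) hW
    have hIH : ‖R (c 0) (c (r + 2)) - ∑ b ∈ range (r + 1),
          R (c (Nat.succAbove (a + 1) b)) (c (Nat.succAbove (a + 1) (b + 1)))‖ ≤
        (∑ l ∈ range r, sewingWeight μ l) * ω (c 0) (c (r + 2)) ^ μ := by
      have hc'0 : c (Nat.succAbove (a + 1) 0) = c 0 := by rw [Nat.succAbove_of_lt a.succ_pos]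
      have hc'r : c (Nat.succAbove (a + 1) (r + 1)) = c (r + 2) := by
        rw [Nat.succAbove_of_le (by omega)]
      simpa only [Function.comp_apply, hc'0, hc'r] using
        ih (hc.comp (Nat.monotone_succAbove (a + 1))) (by simpa only [Function.comp_apply, hc'r])
    calc _ = ‖(R (c 0) (c (r + 2)) - ∑ b ∈ range (r + 1),
              R (c (Nat.succAbove (a + 1) b)) (c (Nat.succAbove (a + 1) (b + 1)))) +
            (R (c a) (c (a + 2)) - R (c a) (c (a + 1)) - R (c (a + 1)) (c (a + 2)))‖ := by
          rw [sum_range_eq_sum_succAbove_sub _ c har]; congr 1; abel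
      _ ≤ _ := (norm_add_le _ _).trans (add_le_add hIH hremove)
      _ = _ := by rw [sum_range_succ, add_mul]

theorem norm_sum_le_of_isDiscreteControl (hω : IsDiscreteControl n ω) (hμ : 1 ≤ μ)
    {c : ℕ → ℕ} (hc : Monotone c) {r : ℕ} (hr : c r ≤ n)
    (hstep : ∀ b < r, ‖R (c b) (c (b + 1))‖ ≤ ω (c b) (c (b + 1)) ^ μ) :
    ‖∑ b ∈ range r, R (c b) (c (b + 1))‖ ≤ ω (c 0) (c r) ^ μ := by
  have hnonneg : ∀ b ∈ range r, 0 ≤ ω (c b) (c (b + 1)) := fun b hb =>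
    hω.nonneg _ _ (hc b.le_succ) ((hc (mem_range.mp hb)).trans hr)
  calc _ ≤ ∑ b ∈ range r, ‖R (c b) (c (b + 1))‖ := norm_sum_le _ _
    _ ≤ ∑ b ∈ range r, ω (c b) (c (b + 1)) ^ μ := sum_le_sum fun b hb => hstep b (mem_range.mp hb)
    _ ≤ (∑ b ∈ range r, ω (c b) (c (b + 1))) ^ μ := Real.sum_rpow_le_rpow_sum _ hnonneg hμ
    _ ≤ _ := Real.rpow_le_rpow (sum_nonneg hnonneg) (hω.sum_le hc hr) (by linarith)

theorem norm_le_of_isDiscreteControl (hω : IsDiscreteControl n ω) (hμ : 1 ≤ μ)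
    (hδ : ∀ i j k, i ≤ j → j ≤ k → k ≤ n → ‖R i k - R i j - R j k‖ ≤ ω i k ^ μ)
    (hstep : ∀ k < n, ‖R k (k + 1)‖ ≤ ω k (k + 1) ^ μ) {i r : ℕ} (hr : i + (r + 1) ≤ n) :
    ‖R i (i + (r + 1))‖ ≤ (1 + ∑ l ∈ range r, sewingWeight μ l) * ω i (i + (r + 1)) ^ μ := by
  have hc : Monotone (i + ·) := fun _ _ h => Nat.add_le_add_left h i
  have hsewing := norm_sub_sum_le_of_isDiscreteControl hω (by linarith) hδ r hc hr
  have hsum := norm_sum_le_of_isDiscreteControl hω hμ hc hr fun b hb => hstep (i + b) (by omega)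
  calc _ ≤ ‖R i (i + (r + 1)) - ∑ b ∈ range (r + 1), R (i + b) (i + (b + 1))‖ +
        ‖∑ b ∈ range (r + 1), R (i + b) (i + (b + 1))‖ := norm_le_norm_sub_add _ _
    _ ≤ _ := by simp only [add_zero] at hsewing hsum; linarith

end Sewing

theorem discrete_sewing_lemma_general
    (n : ℕ)
    (t : ℕ → ℝ)
    {E : Type*} [NormedAddCommGroup E]
    (μ : ℝ) (hμ : 1 < μ)
    (ω : ℝ → ℝ → ℝ)
    (hω_nonneg : ∀ i j : ℕ, i ≤ j → j ≤ n → 0 ≤ ω (t i) (t j))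
    (hω_super : ∀ i j k : ℕ, i ≤ j → j ≤ k → k ≤ n →
      ω (t i) (t j) + ω (t j) (t k) ≤ ω (t i) (t k))
    (R : ℝ → ℝ → E)
    (hR_step : ∀ k : ℕ, k < n → ‖R (t k) (t (k + 1))‖ ≤ ω (t k) (t (k + 1)) ^ μ)
    (hR_delta : ∀ i j k : ℕ, i ≤ j → j ≤ k → k ≤ n →
      ‖R (t i) (t k) - R (t i) (t j) - R (t j) (t k)‖ ≤ ω (t i) (t k) ^ μ) :
    ∀ i j : ℕ, i ≤ j → j ≤ n →
      ‖R (t i) (t j)‖ ≤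
        ((2 : ℝ) ^ μ * ∑' l : ℕ, ((l : ℝ) + 1) ^ (-μ)) * ω (t i) (t j) ^ μ := by
  intro i j hij hjn
  have hω : IsDiscreteControl n fun a b => ω (t a) (t b) := ⟨hω_nonneg, hω_super⟩
  have hW : 0 ≤ ω (t i) (t j) ^ μ := Real.rpow_nonneg (hω_nonneg i j hij hjn) μ
  obtain ⟨m, rfl⟩ := Nat.exists_eq_add_of_le hij
  cases m with
  | zero =>
    have hdiag : ‖R (t i) (t i)‖ ≤ ω (t i) (t i) ^ μ := by
      simpa using hR_delta i i i le_rfl le_rfl hjn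
    simpa using hdiag.trans (le_mul_of_one_le_left hW (by
      simpa using one_add_sum_sewingWeight_le hμ 0))
  | succ r =>
    exact (norm_le_of_isDiscreteControl (R := fun a b => R (t a) (t b)) hω hμ.le hR_delta hR_step
      hjn).trans (mul_le_mul_of_nonneg_right (one_add_sum_sewingWeight_le hμ r) hW)

/-- **Discrete sewing lemma.** Let `ω` be a control on the discrete simplex of the uniform
partition `t k = k * (T / n)` of `[0, T]`, let `E` be a Banach space, `μ > 1`, and let
`R` satisfy `‖R (t k) (t (k+1))‖ ≤ ω (t k) (t (k+1)) ^ μ` for each step, together with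
`‖δR_{sut}‖ ≤ ω (s, t) ^ μ` for all grid points `s ≤ u ≤ t`.  Then
`‖R (s, t)‖ ≤ K_μ * ω (s, t) ^ μ` for all grid points `s ≤ t`, where
`K_μ = 2 ^ μ * ∑_{l ≥ 1} l ^ (-μ)`. -/
theorem discrete_sewing_lemma
    (T : ℝ) (hT : 0 < T) (n : ℕ) (hn : 1 ≤ n)
    (t : ℕ → ℝ) (ht : ∀ k, t k = (k : ℝ) * (T / n))
    {E : Type*} [NormedAddCommGroup E] [NormedSpace ℝ E] [CompleteSpace E]
    (μ : ℝ) (hμ : 1 < μ)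
    (ω : ℝ → ℝ → ℝ)
    (hω_nonneg : ∀ i j : ℕ, i ≤ j → j ≤ n → 0 ≤ ω (t i) (t j))
    (hω_super : ∀ i j k : ℕ, i ≤ j → j ≤ k → k ≤ n →
      ω (t i) (t j) + ω (t j) (t k) ≤ ω (t i) (t k))
    (R : ℝ → ℝ → E)
    (hR_step : ∀ k : ℕ, k < n → ‖R (t k) (t (k + 1))‖ ≤ ω (t k) (t (k + 1)) ^ μ)
    (hR_delta : ∀ i j k : ℕ, i ≤ j → j ≤ k → k ≤ n →
      ‖R (t i) (t k) - R (t i) (t j) - R (t j) (t k)‖ ≤ ω (t i) (t k) ^ μ) :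
    ∀ i j : ℕ, i ≤ j → j ≤ n →
      ‖R (t i) (t j)‖ ≤
        ((2 : ℝ) ^ μ * ∑' l : ℕ, ((l : ℝ) + 1) ^ (-μ)) * ω (t i) (t j) ^ μ :=
  discrete_sewing_lemma_general n t μ hμ ω hω_nonneg hω_super R hR_step hR_delta
end

section
/- Let (Ω, ℱ, ℙ) be a probability space, let p ≥ 1, and let α, β > 0 with α + β > 1. Let f and g assign to each grid point t_k a random variable in L^{2p}(Ω), and suppose there is C ≥ 0 such that ‖f_t − f_s‖_{L^{2p}} ≤ C|t − s|^α and ‖g_t − g_s‖_{L^{2p}} ≤ C|t − s|^β for all grid points s ≤ t. For grid points s ≤ t define J_{st} := ∑_{s ≤ t_k < t} (f_{t_k} − f_s)(g_{t_{k+1}} − g_{t_k}). Then there exists a constant C′ depending only on C, α, β and p (and in particular independent of n, s, t) such that ‖J_{st}‖_{L^p} ≤ C′ (t − s)^{α+β} for all grid points s ≤ t. -/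
/-!
Write `J i j` for the discrete Young sum `∑_{i ≤ k < j} (f_k - f_i)(g_{k+1} - g_k)`. Chen's relation
`J i j = J i a + J a j + (f_a - f_i)(g_j - g_a)` together with Hölder's inequality in
`L^{2p} × L^{2p} → L^p` bounds `‖J i j‖_p` by `‖J i a‖_p + ‖J a j‖_p + C² x^α y^β`, where
`x, y` are the lengths of the two halves. Splitting at the midpoint keeps `y ≤ x ≤ 2y`, and for such
`x, y` the bound `K x^γ + K y^γ + x^α y^β ≤ K (x + y)^γ` holds with `γ = α + β` and
`K = 2 / (γ - 1)`, so strong induction on `j - i` gives `‖J i j‖_p ≤ K C² (t_j - t_i)^γ`.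
-/

open MeasureTheory ENNReal Finset

lemma rpow_add_mul_rpow_sub_one_le {x y γ : ℝ} (hx : 0 < x) (hy : 0 ≤ y) (hγ : 1 ≤ γ) :
    x ^ γ + γ * x ^ (γ - 1) * y ≤ (x + y) ^ γ := by
  have hs : 0 ≤ y / x := div_nonneg hy hx.le
  have bernoulli := one_add_mul_self_le_rpow_one_add (by linarith : -1 ≤ y / x) hγ
  calc x ^ γ + γ * x ^ (γ - 1) * y = x ^ γ * (1 + γ * (y / x)) := by
        rw [Real.rpow_sub_one hx.ne']; field_simp
    _ ≤ x ^ γ * (1 + y / x) ^ γ := by gcongr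
    _ = (x + y) ^ γ := by
        rw [← Real.mul_rpow hx.le (by positivity)]; congr 1; field_simp

lemma rpow_mul_rpow_add_two_div_mul_rpow_le {α β x y : ℝ} (hα : 0 < α) (hβ : 0 < β)
    (hαβ : 1 < α + β) (hy : 0 ≤ y) (hyx : y ≤ x) (hx : x ≤ 2 * y) :
    2 / (α + β - 1) * x ^ (α + β) + 2 / (α + β - 1) * y ^ (α + β) + x ^ α * y ^ β
      ≤ 2 / (α + β - 1) * (x + y) ^ (α + β) := by
  obtain rfl | hy := hy.eq_or_lt
  · obtain rfl : x = 0 := by linarith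
    simp [Real.zero_rpow, hα.ne', hβ.ne', (by linarith : α + β ≠ 0)]
  set γ := α + β
  set K := 2 / (γ - 1)
  have hx0 : 0 < x := hy.trans_le hyx
  have hK : K * γ = K + 2 := by simp only [K]; field_simp [(by linarith : γ - 1 ≠ 0)]; ring
  have hxγ : x ^ γ = x ^ (γ - 1) * x := by rw [← Real.rpow_add_one hx0.ne', sub_add_cancel]
  have hyγ : y ^ γ ≤ x ^ (γ - 1) * y := by
    rw [← sub_add_cancel γ 1, Real.rpow_add_one hy.ne', add_sub_cancel_right]
    gcongr
  have hcross : x ^ α * y ^ β ≤ 2 * (x ^ (γ - 1) * y) := by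
    calc x ^ α * y ^ β ≤ x ^ α * x ^ β := by gcongr
      _ = x ^ (γ - 1) * x := by rw [← Real.rpow_add hx0, hxγ]
      _ ≤ x ^ (γ - 1) * (2 * y) := by gcongr
      _ = 2 * (x ^ (γ - 1) * y) := by ring
  have htangent := rpow_add_mul_rpow_sub_one_le hx0 hy.le (by linarith : 1 ≤ γ)
  have hK0 : 0 ≤ K := div_nonneg zero_le_two (by linarith)
  calc K * x ^ γ + K * y ^ γ + x ^ α * y ^ β
      ≤ K * x ^ γ + K * (x ^ (γ - 1) * y) + 2 * (x ^ (γ - 1) * y) := by gcongr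
    _ = K * (x ^ γ + γ * x ^ (γ - 1) * y) := by linear_combination (-(x ^ (γ - 1) * y)) * hK
    _ ≤ K * (x + y) ^ γ := by gcongr

theorem le_ofReal_mul_rpow_of_le_add_add {Φ : ℕ → ℕ → ℝ≥0∞} {n : ℕ} {α β C Δ : ℝ}
    (hα : 0 < α) (hβ : 0 < β) (hαβ : 1 < α + β) (hC : 0 ≤ C) (hΔ : 0 ≤ Δ)
    (h_self : ∀ i, Φ i i = 0) (h_succ : ∀ i, Φ i (i + 1) = 0)
    (h_split : ∀ i a j, i ≤ a → a ≤ j → j ≤ n →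
      Φ i j ≤ Φ i a + Φ a j + ENNReal.ofReal (C * ((a : ℝ) * Δ - i * Δ) ^ α) *
        ENNReal.ofReal (C * ((j : ℝ) * Δ - a * Δ) ^ β))
    {i j : ℕ} (hij : i ≤ j) (hjn : j ≤ n) :
    Φ i j ≤ ENNReal.ofReal (2 / (α + β - 1) * C ^ 2 * ((j : ℝ) * Δ - i * Δ) ^ (α + β)) := by
  induction hm : j - i using Nat.strong_induction_on generalizing i j with
  | _ m ih =>
  obtain rfl | rfl | hlong : j = i ∨ j = i + 1 ∨ i + 2 ≤ j := by omega
  · simp [h_self]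
  · simp [h_succ]
  -- the midpoint, rounded up so that the right half is never the longer one
  set a := (i + j + 1) / 2
  have hia : i ≤ a := by omega
  have haj : a ≤ j := by omega
  have hright : (j : ℝ) + i ≤ 2 * a := by exact_mod_cast (by omega : j + i ≤ 2 * a)
  have hleft : 3 * (a : ℝ) ≤ 2 * j + i := by exact_mod_cast (by omega : 3 * a ≤ 2 * j + i)
  set x := (a : ℝ) * Δ - i * Δ
  set y := (j : ℝ) * Δ - a * Δ
  have hy : 0 ≤ y := by nlinarith
  have hyx : y ≤ x := by nlinarith
  have hx2 : x ≤ 2 * y := by nlinarith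
  have hx : 0 ≤ x := hy.trans hyx
  set K := 2 / (α + β - 1)
  have hK : 0 ≤ K := div_nonneg zero_le_two (by linarith)
  calc Φ i j ≤ Φ i a + Φ a j + ENNReal.ofReal (C * x ^ α) * ENNReal.ofReal (C * y ^ β) :=
        h_split i a j hia haj hjn
    _ ≤ ENNReal.ofReal (K * C ^ 2 * x ^ (α + β)) + ENNReal.ofReal (K * C ^ 2 * y ^ (α + β))
          + ENNReal.ofReal (C * x ^ α * (C * y ^ β)) := by
        rw [← ENNReal.ofReal_mul (by positivity : 0 ≤ C * x ^ α)]
        gcongr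
        · exact ih (a - i) (by omega) hia (haj.trans hjn) rfl
        · exact ih (j - a) (by omega) haj hjn rfl
    _ = ENNReal.ofReal (K * C ^ 2 * x ^ (α + β) + K * C ^ 2 * y ^ (α + β)
          + C * x ^ α * (C * y ^ β)) := by
        rw [ENNReal.ofReal_add (by positivity) (by positivity),
          ENNReal.ofReal_add (by positivity) (by positivity)]
    _ ≤ ENNReal.ofReal (K * C ^ 2 * ((j : ℝ) * Δ - i * Δ) ^ (α + β)) := by
        gcongr
        have key := mul_le_mul_of_nonneg_left
          (rpow_mul_rpow_add_two_div_mul_rpow_le hα hβ hαβ hy hyx hx2) (sq_nonneg C)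
        rw [show (j : ℝ) * Δ - i * Δ = x + y by ring]
        linarith

lemma ENNReal.holderTriple_two_mul (p : ℝ≥0∞) : HolderTriple (2 * p) (2 * p) p where
  inv_add_inv_eq_inv := by
    rw [ENNReal.mul_inv (by simp) (by simp), ← add_mul, ENNReal.inv_two_add_inv_two, one_mul]

section YoungSum

def youngSum {R : Type*} [Ring R] (F G : ℕ → R) (i j : ℕ) : R :=
  ∑ k ∈ Ico i j, (F k - F i) * (G (k + 1) - G k)

variable {R : Type*} [Ring R] {F G : ℕ → R}

@[simp]
lemma youngSum_self (i : ℕ) : youngSum F G i i = 0 := by simp [youngSum]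

@[simp]
lemma youngSum_succ (i : ℕ) : youngSum F G i (i + 1) = 0 := by simp [youngSum]

lemma youngSum_eq_add_add {i a j : ℕ} (hia : i ≤ a) (haj : a ≤ j) :
    youngSum F G i j = youngSum F G i a + youngSum F G a j + (F a - F i) * (G j - G a) := by
  have hshift : ∀ k ∈ Ico a j, (F k - F i) * (G (k + 1) - G k)
      = (F k - F a) * (G (k + 1) - G k) + (F a - F i) * (G (k + 1) - G k) := fun k _ => by
    noncomm_ring
  rw [youngSum, ← sum_Ico_consecutive _ hia haj, sum_congr rfl hshift, sum_add_distrib,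
    ← mul_sum, sum_Ico_sub G haj, youngSum, youngSum, add_assoc]

end YoungSum

section Lp

variable {Ω : Type*} [MeasurableSpace Ω] {μ : Measure Ω} {F G : ℕ → Ω → ℝ} {n : ℕ}

lemma aestronglyMeasurable_youngSum
    (hF : ∀ i k, i ≤ k → k ≤ n → AEStronglyMeasurable (F k - F i) μ)
    (hG : ∀ i k, i ≤ k → k ≤ n → AEStronglyMeasurable (G k - G i) μ) {i j : ℕ} (hjn : j ≤ n) :
    AEStronglyMeasurable (youngSum F G i j) μ :=
  Finset.aestronglyMeasurable_sum _ fun k hk => by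
    obtain ⟨hik, hkj⟩ := mem_Ico.mp hk
    exact (hF i k hik (by omega)).mul (hG k (k + 1) k.le_succ (by omega))

lemma eLpNorm_youngSum_le {p q r : ℝ≥0∞} [HolderTriple p q r] (hr : 1 ≤ r)
    (hF : ∀ i k, i ≤ k → k ≤ n → AEStronglyMeasurable (F k - F i) μ)
    (hG : ∀ i k, i ≤ k → k ≤ n → AEStronglyMeasurable (G k - G i) μ)
    {i a j : ℕ} (hia : i ≤ a) (haj : a ≤ j) (hjn : j ≤ n) :
    eLpNorm (youngSum F G i j) r μ ≤ eLpNorm (youngSum F G i a) r μ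
      + eLpNorm (youngSum F G a j) r μ + eLpNorm (F a - F i) p μ * eLpNorm (G j - G a) q μ := by
  have hJ (i j : ℕ) (hjn : j ≤ n) : AEStronglyMeasurable (youngSum F G i j) μ :=
    aestronglyMeasurable_youngSum hF hG hjn
  have hFa := hF i a hia (haj.trans hjn)
  have hGj := hG a j haj hjn
  rw [youngSum_eq_add_add hia haj]
  calc _ ≤ eLpNorm (youngSum F G i a + youngSum F G a j) r μ
          + eLpNorm ((F a - F i) * (G j - G a)) r μ :=
        eLpNorm_add_le ((hJ i a (haj.trans hjn)).add (hJ a j hjn)) (hFa.mul hGj) hr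
    _ ≤ _ := by
        gcongr
        · exact eLpNorm_add_le (hJ i a (haj.trans hjn)) (hJ a j hjn) hr
        · exact eLpNorm_smul_le_mul_eLpNorm (𝕜 := ℝ) (E := ℝ) hGj hFa

end Lp

/-- Let `(Ω, ℱ, ℙ)` be a probability space, `p ≥ 1`, `α, β > 0` with `α + β > 1`, and let
`f`, `g` assign to each grid point `t k = k * (T / n)` an `L^{2p}` random variable with
`‖f_t − f_s‖_{L^{2p}} ≤ C |t − s|^α` and `‖g_t − g_s‖_{L^{2p}} ≤ C |t − s|^β` for all grid
points `s ≤ t`.  With `J_{st} := ∑_{s ≤ t_k < t} (f_{t_k} − f_s)(g_{t_{k+1}} − g_{t_k})`,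
there is a constant `C'` depending only on `C, α, β, p` (in particular independent of `n`,
`s` and `t`) such that `‖J_{st}‖_{L^p} ≤ C' (t − s)^{α+β}` for all grid points `s ≤ t`. -/
theorem weighted_sum_Lp_bound
    (T : ℝ) (hT : 0 < T)
    (p α β C : ℝ) (hp : 1 ≤ p) (hα : 0 < α) (hβ : 0 < β) (hαβ : 1 < α + β) (hC : 0 ≤ C) :
    ∃ C' : ℝ, 0 ≤ C' ∧
      ∀ (Ω : Type) (_ : MeasureSpace Ω)
        (_ : IsProbabilityMeasure (volume : Measure Ω))
        (f g : ℝ → Ω → ℝ) (n : ℕ), 1 ≤ n →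
        (∀ i j : ℕ, i ≤ j → j ≤ n →
          MemLp (fun ω => f ((j : ℝ) * (T / n)) ω - f ((i : ℝ) * (T / n)) ω)
              (ENNReal.ofReal (2 * p)) volume ∧
          eLpNorm (fun ω => f ((j : ℝ) * (T / n)) ω - f ((i : ℝ) * (T / n)) ω)
              (ENNReal.ofReal (2 * p)) volume
            ≤ ENNReal.ofReal (C * ((j : ℝ) * (T / n) - (i : ℝ) * (T / n)) ^ α)) →
        (∀ i j : ℕ, i ≤ j → j ≤ n →
          MemLp (fun ω => g ((j : ℝ) * (T / n)) ω - g ((i : ℝ) * (T / n)) ω)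
              (ENNReal.ofReal (2 * p)) volume ∧
          eLpNorm (fun ω => g ((j : ℝ) * (T / n)) ω - g ((i : ℝ) * (T / n)) ω)
              (ENNReal.ofReal (2 * p)) volume
            ≤ ENNReal.ofReal (C * ((j : ℝ) * (T / n) - (i : ℝ) * (T / n)) ^ β)) →
        ∀ i j : ℕ, i ≤ j → j ≤ n →
          eLpNorm
              (fun ω => ∑ k ∈ Finset.Ico i j,
                (f ((k : ℝ) * (T / n)) ω - f ((i : ℝ) * (T / n)) ω) *
                  (g (((k : ℝ) + 1) * (T / n)) ω - g ((k : ℝ) * (T / n)) ω))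
              (ENNReal.ofReal p) volume
            ≤ ENNReal.ofReal (C' * ((j : ℝ) * (T / n) - (i : ℝ) * (T / n)) ^ (α + β)) := by
  refine ⟨2 / (α + β - 1) * C ^ 2, by positivity, ?_⟩
  intro Ω _ _ f g n _ hf hg i j hij hjn
  have := ENNReal.holderTriple_two_mul (ENNReal.ofReal p)
  rw [ENNReal.ofReal_mul zero_le_two, ENNReal.ofReal_ofNat] at hf hg
  set F : ℕ → Ω → ℝ := fun k => f (k * (T / n))
  set G : ℕ → Ω → ℝ := fun k => g (k * (T / n))
  have hJ : (fun ω => ∑ k ∈ Finset.Ico i j, (F k ω - F i ω) * (g (((k : ℝ) + 1) * (T / n)) ω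
      - G k ω)) = youngSum F G i j := by
    ext ω
    simp [youngSum, Finset.sum_apply, G]
  rw [hJ]
  refine le_ofReal_mul_rpow_of_le_add_add (Δ := T / n)
    (Φ := fun i j => eLpNorm (youngSum F G i j) (ENNReal.ofReal p) volume) hα hβ hαβ hC
    (by positivity) (fun _ => by simp) (fun _ => by simp) (fun i a j hia haj hjn => ?_) hij hjn
  calc _ ≤ _ := eLpNorm_youngSum_le (ENNReal.one_le_ofReal.mpr hp)
        (fun i k hik hkn => (hf i k hik hkn).1.1) (fun i k hik hkn => (hg i k hik hkn).1.1)
        hia haj hjn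
    _ ≤ _ := by gcongr; exacts [(hf i a hia (haj.trans hjn)).2, (hg a j haj hjn).2]
end

section
/- For every H ∈ (0,1) and all reals s, u, v, t with 0 ≤ s ≤ u ≤ v ≤ t, the rectangular increment of the fractional Brownian covariance is nonnegative: R([u,v],[s,t]) ≥ 0. -/
/-!
For `s ≤ u ≤ v ≤ t` the diagonal terms `a ^ (2H)` cancel in the rectangular increment, leaving
`½ ((t - u) ^ (2H) - (t - v) ^ (2H) + (v - s) ^ (2H) - (u - s) ^ (2H))`; both differences are
nonnegative because `x ↦ x ^ (2H)` is monotone on `[0, ∞)`. The same holds for any covariance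
`R(a,b) = ½ (φ a + φ b - φ |b - a|)` with `φ` monotone on `[0, ∞)`.
-/

section RectangularIncrement

variable {φ : ℝ → ℝ} {R : ℝ → ℝ → ℝ} {s u v t : ℝ}

theorem rectangular_increment_eq
    (hR : ∀ a b : ℝ, 0 ≤ a → 0 ≤ b → R a b = (φ a + φ b - φ |b - a|) / 2)
    (hs : 0 ≤ s) (hsu : s ≤ u) (huv : u ≤ v) (hvt : v ≤ t) :
    R v t - R v s - R u t + R u s =
      (φ (t - u) - φ (t - v) + φ (v - s) - φ (u - s)) / 2 := by
  have hu : 0 ≤ u := hs.trans hsu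
  have hv : 0 ≤ v := hu.trans huv
  have ht : 0 ≤ t := hv.trans hvt
  rw [hR v t hv ht, hR v s hv hs, hR u t hu ht, hR u s hu hs,
    abs_of_nonneg (sub_nonneg.2 hvt), abs_sub_comm, abs_of_nonneg (sub_nonneg.2 (hsu.trans huv)),
    abs_of_nonneg (sub_nonneg.2 (huv.trans hvt)), abs_sub_comm, abs_of_nonneg (sub_nonneg.2 hsu)]
  ring

theorem rectangular_increment_nonneg_of_monotoneOn (hφ : MonotoneOn φ (Set.Ici 0))
    (hR : ∀ a b : ℝ, 0 ≤ a → 0 ≤ b → R a b = (φ a + φ b - φ |b - a|) / 2)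
    (hs : 0 ≤ s) (hsu : s ≤ u) (huv : u ≤ v) (hvt : v ≤ t) :
    0 ≤ R v t - R v s - R u t + R u s := by
  rw [rectangular_increment_eq hR hs hsu huv hvt]
  have hleft : φ (t - v) ≤ φ (t - u) :=
    hφ (Set.mem_Ici.2 (sub_nonneg.2 hvt)) (Set.mem_Ici.2 (sub_nonneg.2 (huv.trans hvt)))
      (sub_le_sub_left huv t)
  have hright : φ (u - s) ≤ φ (v - s) :=
    hφ (Set.mem_Ici.2 (sub_nonneg.2 hsu)) (Set.mem_Ici.2 (sub_nonneg.2 (hsu.trans huv)))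
      (sub_le_sub_right huv s)
  linarith

end RectangularIncrement

theorem fbm_rectangular_increment_nonneg_general
    (H : ℝ) (hH0 : 0 < H)
    (R : ℝ → ℝ → ℝ)
    (hR : ∀ a b : ℝ, 0 ≤ a → 0 ≤ b →
      R a b = (a ^ (2 * H) + b ^ (2 * H) - |b - a| ^ (2 * H)) / 2)
    (s u v t : ℝ) (hs : 0 ≤ s) (hsu : s ≤ u) (huv : u ≤ v) (hvt : v ≤ t) :
    0 ≤ R v t - R v s - R u t + R u s :=
  rectangular_increment_nonneg_of_monotoneOn
    (Real.monotoneOn_rpow_Ici_of_exponent_nonneg (by positivity)) hR hs hsu huv hvt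

/-- For every `H ∈ (0,1)` and all `0 ≤ s ≤ u ≤ v ≤ t`, the rectangular increment
`R([u,v],[s,t]) = R(v,t) − R(v,s) − R(u,t) + R(u,s)` of the fractional Brownian covariance
`R(s,t) = ½(s^{2H} + t^{2H} − |t − s|^{2H})` is nonnegative. -/
theorem fbm_rectangular_increment_nonneg
    (H : ℝ) (hH0 : 0 < H) (hH1 : H < 1)
    (R : ℝ → ℝ → ℝ)
    (hR : ∀ a b : ℝ, 0 ≤ a → 0 ≤ b →
      R a b = (a ^ (2 * H) + b ^ (2 * H) - |b - a| ^ (2 * H)) / 2)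
    (s u v t : ℝ) (hs : 0 ≤ s) (hsu : s ≤ u) (huv : u ≤ v) (hvt : v ≤ t) :
    0 ≤ R v t - R v s - R u t + R u s :=
  fbm_rectangular_increment_nonneg_general H hH0 R hR s u v t hs hsu huv hvt
end

section
/- For every H ∈ (0,1/2] and all reals s, u, v, t with 0 ≤ s ≤ u ≤ v ≤ t, one has the two-sided bound −(v − u)^{2H} ≤ R([u,v],[s,u]) + R([u,v],[v,t]) ≤ 0; equivalently, |R([u,v],[s,u]) + R([u,v],[v,t])| ≤ (v − u)^{2H}. -/
/-!
Both increments over an interval adjacent to `[u, v]` reduce to increments of `x ↦ x ^ (2H)`: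
`2 R([u,v],[s,u]) = (v-s)^{2H} - (u-s)^{2H} - (v-u)^{2H}` and
`2 R([u,v],[v,t]) = (t-u)^{2H} - (t-v)^{2H} - (v-u)^{2H}`.
For `2H ≤ 1` the power is monotone and subadditive, so each difference `y^{2H} - x^{2H}` lies
between `0` and `(y-x)^{2H} = (v-u)^{2H}`, which gives both bounds.
-/

lemma Real.rpow_sub_rpow_mem_Icc {p x y : ℝ} (hp0 : 0 ≤ p) (hp1 : p ≤ 1) (hx : 0 ≤ x)
    (hxy : x ≤ y) : y ^ p - x ^ p ∈ Set.Icc 0 ((y - x) ^ p) := by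
  have hsub : y ^ p ≤ x ^ p + (y - x) ^ p := by
    simpa using Real.rpow_add_le_add_rpow hx (sub_nonneg.2 hxy) hp0 hp1
  exact ⟨sub_nonneg.2 (Real.rpow_le_rpow hx hxy hp0), by linarith⟩

section Covariance

variable {p : ℝ} {R : ℝ → ℝ → ℝ}

lemma rect_increment_eq
    (hR : ∀ a b : ℝ, 0 ≤ a → 0 ≤ b → R a b = (a ^ p + b ^ p - |b - a| ^ p) / 2)
    {a b c d : ℝ} (ha : 0 ≤ a) (hb : 0 ≤ b) (hc : 0 ≤ c) (hd : 0 ≤ d) :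
    R b d - R b c - R a d + R a c =
      (|c - b| ^ p + |d - a| ^ p - |d - b| ^ p - |c - a| ^ p) / 2 := by
  rw [hR b d hb hd, hR b c hb hc, hR a d ha hd, hR a c ha hc]
  ring

lemma rect_increment_left_adjacent
    (hR : ∀ a b : ℝ, 0 ≤ a → 0 ≤ b → R a b = (a ^ p + b ^ p - |b - a| ^ p) / 2)
    (hp : p ≠ 0) {s u v : ℝ} (hs : 0 ≤ s) (hsu : s ≤ u) (huv : u ≤ v) :
    R v u - R v s - R u u + R u s = ((v - s) ^ p - (u - s) ^ p - (v - u) ^ p) / 2 := by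
  rw [rect_increment_eq hR (hs.trans hsu) (hs.trans (hsu.trans huv)) hs (hs.trans hsu),
    abs_sub_comm s v, abs_sub_comm u v, abs_sub_comm s u, sub_self, abs_zero,
    Real.zero_rpow hp, abs_of_nonneg (by linarith : 0 ≤ v - s),
    abs_of_nonneg (by linarith : 0 ≤ v - u), abs_of_nonneg (by linarith : 0 ≤ u - s)]
  ring

lemma rect_increment_right_adjacent
    (hR : ∀ a b : ℝ, 0 ≤ a → 0 ≤ b → R a b = (a ^ p + b ^ p - |b - a| ^ p) / 2)
    (hp : p ≠ 0) {u v t : ℝ} (hu : 0 ≤ u) (huv : u ≤ v) (hvt : v ≤ t) :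
    R v t - R v v - R u t + R u v = ((t - u) ^ p - (t - v) ^ p - (v - u) ^ p) / 2 := by
  rw [rect_increment_eq hR hu (hu.trans huv) (hu.trans huv) (hu.trans (huv.trans hvt)),
    sub_self, abs_zero, Real.zero_rpow hp, abs_of_nonneg (by linarith : 0 ≤ t - u),
    abs_of_nonneg (by linarith : 0 ≤ t - v), abs_of_nonneg (by linarith : 0 ≤ v - u)]
  ring

end Covariance

/-- For every `H ∈ (0,1/2]` and all `0 ≤ s ≤ u ≤ v ≤ t`, one has the two-sided bound
`−(v − u)^{2H} ≤ R([u,v],[s,u]) + R([u,v],[v,t]) ≤ 0`, where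
`R([a,b],[c,d]) = R(b,d) − R(b,c) − R(a,d) + R(a,c)` and
`R(s,t) = ½(s^{2H} + t^{2H} − |t − s|^{2H})`; equivalently
`|R([u,v],[s,u]) + R([u,v],[v,t])| ≤ (v − u)^{2H}`. -/
theorem fbm_complement_increment_bound
    (H : ℝ) (hH0 : 0 < H) (hH1 : H ≤ 1 / 2)
    (R : ℝ → ℝ → ℝ)
    (hR : ∀ a b : ℝ, 0 ≤ a → 0 ≤ b →
      R a b = (a ^ (2 * H) + b ^ (2 * H) - |b - a| ^ (2 * H)) / 2)
    (s u v t : ℝ) (hs : 0 ≤ s) (hsu : s ≤ u) (huv : u ≤ v) (hvt : v ≤ t) :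
    (-(v - u) ^ (2 * H)
        ≤ (R v u - R v s - R u u + R u s) + (R v t - R v v - R u t + R u v)) ∧
    ((R v u - R v s - R u u + R u s) + (R v t - R v v - R u t + R u v) ≤ 0) ∧
    (|(R v u - R v s - R u u + R u s) + (R v t - R v v - R u t + R u v)|
        ≤ (v - u) ^ (2 * H)) := by
  have hp : 2 * H ≠ 0 := by positivity
  have hp0 : 0 ≤ 2 * H := by positivity
  have hp1 : 2 * H ≤ 1 := by linarith
  rw [rect_increment_left_adjacent hR hp hs hsu huv,
    rect_increment_right_adjacent hR hp (hs.trans hsu) huv hvt]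
  obtain ⟨hleft0, hleft⟩ := Real.rpow_sub_rpow_mem_Icc hp0 hp1 (sub_nonneg.2 hsu)
    (sub_le_sub_right huv s)
  obtain ⟨hright0, hright⟩ := Real.rpow_sub_rpow_mem_Icc hp0 hp1 (sub_nonneg.2 hvt)
    (sub_le_sub_left huv t)
  rw [sub_sub_sub_cancel_right] at hleft
  rw [sub_sub_sub_cancel_left] at hright
  refine ⟨by linarith, by linarith, abs_le.2 ⟨by linarith, by linarith⟩⟩
end

section
/- Let H ∈ (0,1/2], T > 0, and 0 ≤ u < v ≤ T. Then the total variation of the density ρ_{uv} over [0,T] is bounded as ∫_0^T |ρ_{uv}(η)| dη ≤ 2 (v − u)^{2H}. -/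
/-!
On each of `(0, u)`, `(u, v)` and `(v, T)` the density has constant sign, since `t ↦ t ^ (2H - 1)`
is antitone on `(0, ∞)`; so there `|ρ|` is `H` times a sum or difference of the kernels
`|c - η| ^ (2H - 1)`, which are integrable (`2H - 1 > -1`) with explicit primitives. This gives
`∫₀ᵀ |ρ| = ½ (u^{2H} - v^{2H}) + ½ ((T - v)^{2H} - (T - u)^{2H}) + 2 (v - u)^{2H}`, and both
brackets are nonpositive because `t ↦ t ^ (2H)` is monotone.
-/

open MeasureTheory Set intervalIntegral
open scoped Interval

lemma intervalIntegrable_const_sub_rpow {s : ℝ} (hs : 0 < s) (c a b : ℝ) :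
    IntervalIntegrable (fun η => (c - η) ^ (s - 1)) volume a b := by
  simpa using (intervalIntegrable_rpow' (a := c - a) (b := c - b) (r := s - 1)
    (by linarith)).comp_sub_left c

lemma intervalIntegrable_sub_const_rpow {s : ℝ} (hs : 0 < s) (c a b : ℝ) :
    IntervalIntegrable (fun η => (η - c) ^ (s - 1)) volume a b := by
  simpa using (intervalIntegrable_rpow' (a := a - c) (b := b - c) (r := s - 1)
    (by linarith)).comp_sub_right c

lemma integral_const_sub_rpow {s : ℝ} (hs : 0 < s) (c a b : ℝ) :
    ∫ η in a..b, (c - η) ^ (s - 1) = ((c - a) ^ s - (c - b) ^ s) / s := by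
  rw [integral_comp_sub_left (fun x => x ^ (s - 1)), integral_rpow (Or.inl (by linarith)),
    sub_add_cancel]

lemma integral_sub_const_rpow {s : ℝ} (hs : 0 < s) (c a b : ℝ) :
    ∫ η in a..b, (η - c) ^ (s - 1) = ((b - c) ^ s - (a - c) ^ s) / s := by
  rw [integral_comp_sub_right (fun x => x ^ (s - 1)), integral_rpow (Or.inl (by linarith)),
    sub_add_cancel]

lemma integral_eq_add_add_of_eqOn_Ioo {f g₁ g₂ g₃ : ℝ → ℝ} {a b c d : ℝ}
    (hab : a ≤ b) (hbc : b ≤ c) (hcd : c ≤ d)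
    (h₁ : EqOn f g₁ (Ioo a b)) (h₂ : EqOn f g₂ (Ioo b c)) (h₃ : EqOn f g₃ (Ioo c d))
    (i₁ : IntervalIntegrable g₁ volume a b) (i₂ : IntervalIntegrable g₂ volume b c)
    (i₃ : IntervalIntegrable g₃ volume c d) :
    ∫ x in a..d, f x = (∫ x in a..b, g₁ x) + (∫ x in b..c, g₂ x) + ∫ x in c..d, g₃ x := by
  have j₁ := i₁.congr_uIoo (uIoo_of_le hab ▸ h₁.symm)
  have j₂ := i₂.congr_uIoo (uIoo_of_le hbc ▸ h₂.symm)
  have j₃ := i₃.congr_uIoo (uIoo_of_le hcd ▸ h₃.symm)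
  rw [← integral_add_adjacent_intervals (j₁.trans j₂) j₃,
    ← integral_add_adjacent_intervals j₁ j₂, integral_congr_Ioo_of_le hab h₁,
    integral_congr_Ioo_of_le hbc h₂, integral_congr_Ioo_of_le hcd h₃]

lemma sign_mul_abs_rpow_of_pos {x : ℝ} (hx : 0 < x) (r : ℝ) :
    Real.sign x * |x| ^ r = x ^ r := by
  rw [Real.sign_of_pos hx, abs_of_pos hx, one_mul]

lemma sign_mul_abs_rpow_of_neg {x : ℝ} (hx : x < 0) (r : ℝ) :
    Real.sign x * |x| ^ r = -(-x) ^ r := by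
  rw [Real.sign_of_neg hx, abs_of_neg hx, neg_one_mul]

section
variable {r u v η : ℝ}

lemma abs_sign_mul_abs_rpow_sub_of_lt_left (hr : r ≤ 0) (hu : η < u) (huv : u < v) :
    |Real.sign (v - η) * |v - η| ^ r - Real.sign (u - η) * |u - η| ^ r|
      = (u - η) ^ r - (v - η) ^ r := by
  rw [sign_mul_abs_rpow_of_pos (by linarith), sign_mul_abs_rpow_of_pos (by linarith),
    abs_sub_comm, abs_of_nonneg (sub_nonneg.2 <|
      Real.rpow_le_rpow_of_nonpos (by linarith) (by linarith) hr)]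

lemma abs_sign_mul_abs_rpow_sub_of_mem_Ioo (hη : η ∈ Ioo u v) :
    |Real.sign (v - η) * |v - η| ^ r - Real.sign (u - η) * |u - η| ^ r|
      = (v - η) ^ r + (η - u) ^ r := by
  rw [sign_mul_abs_rpow_of_pos (by linarith [hη.2]), sign_mul_abs_rpow_of_neg (by linarith [hη.1]),
    neg_sub, sub_neg_eq_add, abs_of_nonneg (add_nonneg (Real.rpow_nonneg (by linarith [hη.2]) _)
      (Real.rpow_nonneg (by linarith [hη.1]) _))]

lemma abs_sign_mul_abs_rpow_sub_of_lt_right (hr : r ≤ 0) (huv : u < v) (hv : v < η) :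
    |Real.sign (v - η) * |v - η| ^ r - Real.sign (u - η) * |u - η| ^ r|
      = (η - v) ^ r - (η - u) ^ r := by
  rw [sign_mul_abs_rpow_of_neg (by linarith), sign_mul_abs_rpow_of_neg (by linarith),
    neg_sub, neg_sub, neg_sub_neg, abs_sub_comm, abs_of_nonneg (sub_nonneg.2 <|
      Real.rpow_le_rpow_of_nonpos (by linarith) (by linarith) hr)]

end

lemma integral_abs_sign_mul_abs_rpow_sub {s a u v T : ℝ} (hs : 0 < s) (hs1 : s ≤ 1)
    (hau : a ≤ u) (huv : u < v) (hvT : v ≤ T) :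
    ∫ η in a..T, |Real.sign (v - η) * |v - η| ^ (s - 1) - Real.sign (u - η) * |u - η| ^ (s - 1)|
      = ((u - a) ^ s - (v - a) ^ s + (T - v) ^ s - (T - u) ^ s + 4 * (v - u) ^ s) / s := by
  have hr : s - 1 ≤ 0 := by linarith
  have iL := intervalIntegrable_const_sub_rpow hs
  have iR := intervalIntegrable_sub_const_rpow hs
  rw [integral_eq_add_add_of_eqOn_Ioo hau huv.le hvT
      (fun η hη => abs_sign_mul_abs_rpow_sub_of_lt_left hr hη.2 huv)
      (fun η hη => abs_sign_mul_abs_rpow_sub_of_mem_Ioo hη)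
      (fun η hη => abs_sign_mul_abs_rpow_sub_of_lt_right hr huv hη.1)
      ((iL u a u).sub (iL v a u)) ((iL v u v).add (iR u u v)) ((iR v v T).sub (iR u v T)),
    integral_sub (iL u a u) (iL v a u), integral_add (iL v u v) (iR u u v),
    integral_sub (iR v v T) (iR u v T), integral_const_sub_rpow hs, integral_const_sub_rpow hs,
    integral_const_sub_rpow hs, integral_sub_const_rpow hs, integral_sub_const_rpow hs,
    integral_sub_const_rpow hs]
  simp only [sub_self, Real.zero_rpow hs.ne']
  ring

theorem fbm_density_total_variation_bound_general
    (H : ℝ) (hH0 : 0 < H) (hH1 : H ≤ 1 / 2)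
    (T : ℝ)
    (u v : ℝ) (hu : 0 ≤ u) (huv : u < v) (hv : v ≤ T)
    (ρ : ℝ → ℝ)
    (hρ : ∀ η : ℝ, 0 ≤ η → η ≠ u → η ≠ v →
      ρ η = H * (Real.sign (v - η) * |v - η| ^ (2 * H - 1)
        - Real.sign (u - η) * |u - η| ^ (2 * H - 1))) :
    ∫ η in (0 : ℝ)..T, |ρ η| ≤ 2 * (v - u) ^ (2 * H) := by
  have hs : 0 < 2 * H := by positivity
  have hρ_abs : ∀ᵐ η, η ∈ Ι 0 T → |ρ η| = H * |Real.sign (v - η) * |v - η| ^ (2 * H - 1)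
      - Real.sign (u - η) * |u - η| ^ (2 * H - 1)| := by
    filter_upwards [volume.ae_ne u, volume.ae_ne v] with η hηu hηv hη
    rw [uIoc_of_le (hu.trans (huv.le.trans hv))] at hη
    rw [hρ η hη.1.le hηu hηv, abs_mul, abs_of_pos hH0]
  have hu_v : u ^ (2 * H) ≤ v ^ (2 * H) := Real.rpow_le_rpow hu huv.le hs.le
  have hTv_Tu : (T - v) ^ (2 * H) ≤ (T - u) ^ (2 * H) :=
    Real.rpow_le_rpow (by linarith) (by linarith) hs.le
  rw [integral_congr_ae hρ_abs, intervalIntegral.integral_const_mul,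
    integral_abs_sign_mul_abs_rpow_sub hs (by linarith) hu huv hv, sub_zero, sub_zero,
    mul_div_left_comm, div_mul_cancel_right₀ hH0.ne']
  linarith

/-- For `H ∈ (0,1/2]`, `T > 0` and `0 ≤ u < v ≤ T`, the density
`ρ_{uv}(η) = H (sgn(v − η)|v − η|^{2H−1} − sgn(u − η)|u − η|^{2H−1})` (set to `0` at
`η ∈ {u, v}`) satisfies `∫_0^T |ρ_{uv}(η)| dη ≤ 2 (v − u)^{2H}`. -/
theorem fbm_density_total_variation_bound
    (H : ℝ) (hH0 : 0 < H) (hH1 : H ≤ 1 / 2)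
    (T : ℝ) (hT : 0 < T)
    (u v : ℝ) (hu : 0 ≤ u) (huv : u < v) (hv : v ≤ T)
    (ρ : ℝ → ℝ)
    (hρ : ∀ η : ℝ, 0 ≤ η → η ≠ u → η ≠ v →
      ρ η = H * (Real.sign (v - η) * |v - η| ^ (2 * H - 1)
        - Real.sign (u - η) * |u - η| ^ (2 * H - 1)))
    (hρu : ρ u = 0) (hρv : ρ v = 0) :
    ∫ η in (0 : ℝ)..T, |ρ η| ≤ 2 * (v - u) ^ (2 * H) :=
  fbm_density_total_variation_bound_general H hH0 hH1 T u v hu huv hv ρ hρ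
end

section
/- Let H ∈ (0,1/2], T > 0, and let φ : [0,T] → ℝ be bounded and measurable. Then for all 0 ≤ s < t ≤ T, |∫_0^T φ(η) ρ_{st}(η) dη| ≤ 2 (t − s)^{2H} · sup_{η ∈ [0,T]} |φ(η)|. -/
/-!
`ρ_{st}` is the derivative of the potential `P(η) = (|s - η|^{2H} - |t - η|^{2H}) / 2`, which is
`R(η, t) - R(η, s)` up to an additive constant. Since `2H - 1 ≤ 0`, `ρ_{st}` is `≤ 0` on
`(0, s)`, `≥ 0` on `(s, t)` and `≤ 0` on `(t, T)`, so by the fundamental theorem of calculus on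
each piece `∫_0^T |ρ_{st}| = 2 (P t - P s) + P 0 - P T ≤ 2 (t - s)^{2H}`, as
`P 0 ≤ 0 ≤ P T`. Then `|∫ φ ρ_{st}| ≤ sup |φ| · ∫ |ρ_{st}|`.
-/

open MeasureTheory Set intervalIntegral

theorem hasDerivAt_abs_rpow_of_ne_zero (p : ℝ) {x : ℝ} (hx : x ≠ 0) :
    HasDerivAt (fun y : ℝ => |y| ^ p) (p * (Real.sign x * |x| ^ (p - 1))) x := by
  have hpow := Real.hasDerivAt_rpow_const (x := |x|) (p := p) (Or.inl (abs_ne_zero.2 hx))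
  rcases hx.lt_or_gt with hneg | hpos
  · refine (hpow.comp x (hasDerivAt_abs_neg hneg)).congr_deriv ?_
    rw [Real.sign_of_neg hneg]
    ring
  · refine (hpow.comp x (hasDerivAt_abs_pos hpos)).congr_deriv ?_
    rw [Real.sign_of_pos hpos]
    ring

/-- A derivative of constant sign is integrable, so the fundamental theorem of calculus computes
the integral of its absolute value. -/
theorem integral_abs_eq_sub_of_hasDerivAt_of_nonneg {f f' : ℝ → ℝ} {a b : ℝ} (hab : a ≤ b)
    (hcont : ContinuousOn f (Icc a b)) (hderiv : ∀ x ∈ Ioo a b, HasDerivAt f (f' x) x)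
    (hf' : ∀ x ∈ Ioo a b, 0 ≤ f' x) :
    IntervalIntegrable (fun x => |f' x|) volume a b ∧ ∫ x in a..b, |f' x| = f b - f a := by
  have hderiv' : ∀ x ∈ Ioo a b, HasDerivAt f |f' x| x := fun x hx => by
    rw [abs_of_nonneg (hf' x hx)]
    exact hderiv x hx
  have hint : IntervalIntegrable (fun x => |f' x|) volume a b :=
    (intervalIntegrable_iff_integrableOn_Ioc_of_le hab).2 <|
      integrableOn_deriv_of_nonneg hcont hderiv' fun x _ => abs_nonneg (f' x)
  exact ⟨hint, integral_eq_sub_of_hasDerivAt_of_le hab hcont hderiv' hint⟩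

theorem integral_abs_eq_sub_of_hasDerivAt_of_nonpos {f f' : ℝ → ℝ} {a b : ℝ} (hab : a ≤ b)
    (hcont : ContinuousOn f (Icc a b)) (hderiv : ∀ x ∈ Ioo a b, HasDerivAt f (f' x) x)
    (hf' : ∀ x ∈ Ioo a b, f' x ≤ 0) :
    IntervalIntegrable (fun x => |f' x|) volume a b ∧ ∫ x in a..b, |f' x| = f a - f b := by
  have h := integral_abs_eq_sub_of_hasDerivAt_of_nonneg (f := -f) (f' := -f') hab hcont.neg
    (fun x hx => (hderiv x hx).neg) fun x hx => neg_nonneg.2 (hf' x hx)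
  simp only [Pi.neg_apply, abs_neg] at h
  exact ⟨h.1, by linarith [h.2]⟩

noncomputable def fbmKernel (H u v η : ℝ) : ℝ :=
  H * (Real.sign (v - η) * |v - η| ^ (2 * H - 1) - Real.sign (u - η) * |u - η| ^ (2 * H - 1))

noncomputable def fbmKernelPrimitive (H u v η : ℝ) : ℝ :=
  (|u - η| ^ (2 * H) - |v - η| ^ (2 * H)) / 2

section Kernel

variable {H u v η : ℝ}

theorem continuous_fbmKernelPrimitive (hH : 0 ≤ H) : Continuous (fbmKernelPrimitive H u v) := by
  have hpow : Continuous fun x : ℝ => |x| ^ (2 * H) :=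
    (Real.continuous_rpow_const (by linarith)).comp continuous_abs
  exact ((hpow.comp (continuous_const.sub continuous_id)).sub
    (hpow.comp (continuous_const.sub continuous_id))).div_const 2

theorem hasDerivAt_fbmKernelPrimitive (hu : η ≠ u) (hv : η ≠ v) :
    HasDerivAt (fbmKernelPrimitive H u v) (fbmKernel H u v η) η := by
  have hdist : ∀ c, η ≠ c →
      HasDerivAt (fun y => |c - y| ^ (2 * H))
        (2 * H * (Real.sign (c - η) * |c - η| ^ (2 * H - 1)) * -1) η := fun c hc =>
    (hasDerivAt_abs_rpow_of_ne_zero _ (sub_ne_zero.2 hc.symm)).comp η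
      ((hasDerivAt_id η).const_sub c)
  refine (((hdist u hu).sub (hdist v hv)).div_const 2).congr_deriv ?_
  rw [fbmKernel]
  ring

theorem fbmKernel_nonpos_of_lt_left (hH0 : 0 ≤ H) (hH1 : H ≤ 1 / 2) (hηu : η < u)
    (huv : u ≤ v) :
    fbmKernel H u v η ≤ 0 := by
  have hu : 0 < u - η := by linarith
  have hv : 0 < v - η := by linarith
  have hle : (v - η) ^ (2 * H - 1) ≤ (u - η) ^ (2 * H - 1) :=
    Real.rpow_le_rpow_of_nonpos hu (by linarith) (by linarith)
  rw [fbmKernel, Real.sign_of_pos hu, Real.sign_of_pos hv, abs_of_pos hu, abs_of_pos hv]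
  nlinarith

theorem fbmKernel_nonneg_of_mem_Ioo (hH0 : 0 ≤ H) (hη : η ∈ Ioo u v) :
    0 ≤ fbmKernel H u v η := by
  have hu : u - η < 0 := by linarith [hη.1]
  have hv : 0 < v - η := by linarith [hη.2]
  rw [fbmKernel, Real.sign_of_neg hu, Real.sign_of_pos hv]
  have := Real.rpow_nonneg (abs_nonneg (u - η)) (2 * H - 1)
  have := Real.rpow_nonneg (abs_nonneg (v - η)) (2 * H - 1)
  nlinarith

theorem fbmKernel_nonpos_of_right_lt (hH0 : 0 ≤ H) (hH1 : H ≤ 1 / 2) (huv : u ≤ v)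
    (hvη : v < η) :
    fbmKernel H u v η ≤ 0 := by
  have hu : u - η < 0 := by linarith
  have hv : v - η < 0 := by linarith
  have hle : (η - u) ^ (2 * H - 1) ≤ (η - v) ^ (2 * H - 1) :=
    Real.rpow_le_rpow_of_nonpos (by linarith) (by linarith) (by linarith)
  rw [fbmKernel, Real.sign_of_neg hu, Real.sign_of_neg hv, abs_of_neg hu, abs_of_neg hv,
    neg_sub, neg_sub]
  nlinarith

theorem fbmKernelPrimitive_sub (hH : 0 < H) (huv : u ≤ v) :
    fbmKernelPrimitive H u v v - fbmKernelPrimitive H u v u = (v - u) ^ (2 * H) := by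
  simp only [fbmKernelPrimitive, sub_self, abs_zero, Real.zero_rpow (by positivity : 2 * H ≠ 0),
    abs_sub_comm u v, abs_of_nonneg (sub_nonneg.2 huv)]
  ring

theorem fbmKernelPrimitive_nonpos_of_le_left (hH : 0 ≤ H) (hηu : η ≤ u) (huv : u ≤ v) :
    fbmKernelPrimitive H u v η ≤ 0 := by
  have : (u - η) ^ (2 * H) ≤ (v - η) ^ (2 * H) :=
    Real.rpow_le_rpow (by linarith) (by linarith) (by linarith)
  rw [fbmKernelPrimitive, abs_of_nonneg (by linarith), abs_of_nonneg (by linarith)]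
  linarith

theorem fbmKernelPrimitive_nonneg_of_right_le (hH : 0 ≤ H) (huv : u ≤ v) (hvη : v ≤ η) :
    0 ≤ fbmKernelPrimitive H u v η := by
  have : (η - v) ^ (2 * H) ≤ (η - u) ^ (2 * H) :=
    Real.rpow_le_rpow (by linarith) (by linarith) (by linarith)
  rw [fbmKernelPrimitive, abs_sub_comm u, abs_sub_comm v, abs_of_nonneg (by linarith),
    abs_of_nonneg (by linarith)]
  linarith

theorem integral_abs_fbmKernel_le {T : ℝ} (hH0 : 0 < H) (hH1 : H ≤ 1 / 2) (hu : 0 ≤ u)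
    (huv : u ≤ v) (hvT : v ≤ T) :
    IntervalIntegrable (fun η => |fbmKernel H u v η|) volume 0 T ∧
      ∫ η in (0 : ℝ)..T, |fbmKernel H u v η| ≤ 2 * (v - u) ^ (2 * H) := by
  have hP : ∀ a b, ContinuousOn (fbmKernelPrimitive H u v) (Icc a b) := fun _ _ =>
    (continuous_fbmKernelPrimitive hH0.le).continuousOn
  obtain ⟨hint₁, hI₁⟩ := integral_abs_eq_sub_of_hasDerivAt_of_nonpos hu (hP _ _)
    (fun η hη => hasDerivAt_fbmKernelPrimitive hη.2.ne (hη.2.trans_le huv).ne)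
    fun η hη => fbmKernel_nonpos_of_lt_left hH0.le hH1 hη.2 huv
  obtain ⟨hint₂, hI₂⟩ := integral_abs_eq_sub_of_hasDerivAt_of_nonneg huv (hP _ _)
    (fun η hη => hasDerivAt_fbmKernelPrimitive hη.1.ne' hη.2.ne)
    fun η hη => fbmKernel_nonneg_of_mem_Ioo hH0.le hη
  obtain ⟨hint₃, hI₃⟩ := integral_abs_eq_sub_of_hasDerivAt_of_nonpos hvT (hP _ _)
    (fun η hη => hasDerivAt_fbmKernelPrimitive (huv.trans_lt hη.1).ne' hη.1.ne')
    fun η hη => fbmKernel_nonpos_of_right_lt hH0.le hH1 huv hη.1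
  refine ⟨(hint₁.trans hint₂).trans hint₃, ?_⟩
  rw [← integral_add_adjacent_intervals (hint₁.trans hint₂) hint₃,
    ← integral_add_adjacent_intervals hint₁ hint₂, hI₁, hI₂, hI₃]
  have hPuv := fbmKernelPrimitive_sub hH0 huv
  have hP0 := fbmKernelPrimitive_nonpos_of_le_left hH0.le hu huv
  have hPT := fbmKernelPrimitive_nonneg_of_right_le hH0.le huv hvT
  linarith

end Kernel

theorem fbm_density_pairing_bound_general
    (H : ℝ) (hH0 : 0 < H) (hH1 : H ≤ 1 / 2)
    (T : ℝ)
    (φ : ℝ → ℝ)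
    (hφb : ∃ M : ℝ, ∀ η ∈ Set.Icc (0 : ℝ) T, |φ η| ≤ M)
    (s t : ℝ) (hs : 0 ≤ s) (hst : s < t) (ht : t ≤ T)
    (ρ : ℝ → ℝ)
    (hρ : ∀ η : ℝ, 0 ≤ η → η ≠ s → η ≠ t →
      ρ η = H * (Real.sign (t - η) * |t - η| ^ (2 * H - 1)
        - Real.sign (s - η) * |s - η| ^ (2 * H - 1))) :
    |∫ η in (0 : ℝ)..T, φ η * ρ η|
      ≤ 2 * (t - s) ^ (2 * H) * sSup ((fun η => |φ η|) '' Set.Icc (0 : ℝ) T) := by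
  have hT : 0 ≤ T := by linarith
  obtain ⟨hint, hle⟩ := integral_abs_fbmKernel_le (T := T) hH0 hH1 hs hst.le ht
  set M := sSup ((fun η => |φ η|) '' Set.Icc (0 : ℝ) T)
  have hM : ∀ η ∈ Icc 0 T, |φ η| ≤ M := fun η hη =>
    le_csSup (hφb.imp fun _ h => forall_mem_image.2 h) (mem_image_of_mem _ hη)
  have hM0 : 0 ≤ M := (abs_nonneg _).trans (hM 0 ⟨le_rfl, hT⟩)
  have hbound : ∀ᵐ η, η ∈ Ioc 0 T → ‖φ η * ρ η‖ ≤ M * |fbmKernel H s t η| := by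
    filter_upwards [Measure.ae_ne volume s, Measure.ae_ne volume t] with η hηs hηt hη
    rw [Real.norm_eq_abs, abs_mul, hρ η hη.1.le hηs hηt, ← fbmKernel]
    exact mul_le_mul_of_nonneg_right (hM η (Ioc_subset_Icc_self hη)) (abs_nonneg _)
  calc |∫ η in (0 : ℝ)..T, φ η * ρ η|
      ≤ ∫ η in (0 : ℝ)..T, M * |fbmKernel H s t η| :=
        norm_integral_le_of_norm_le hT hbound (hint.const_mul M)
    _ = M * ∫ η in (0 : ℝ)..T, |fbmKernel H s t η| := integral_const_mul M _
    _ ≤ M * (2 * (t - s) ^ (2 * H)) := mul_le_mul_of_nonneg_left hle hM0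
    _ = 2 * (t - s) ^ (2 * H) * M := mul_comm _ _

/-- For `H ∈ (0,1/2]`, `T > 0`, a bounded measurable `φ : [0,T] → ℝ` and `0 ≤ s < t ≤ T`,
`|∫_0^T φ(η) ρ_{st}(η) dη| ≤ 2 (t − s)^{2H} sup_{η ∈ [0,T]} |φ(η)|`, where
`ρ_{st}(η) = H (sgn(t − η)|t − η|^{2H−1} − sgn(s − η)|s − η|^{2H−1})` (set to `0` at
`η ∈ {s, t}`). -/
theorem fbm_density_pairing_bound
    (H : ℝ) (hH0 : 0 < H) (hH1 : H ≤ 1 / 2)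
    (T : ℝ) (hT : 0 < T)
    (φ : ℝ → ℝ) (hφm : Measurable φ)
    (hφb : ∃ M : ℝ, ∀ η ∈ Set.Icc (0 : ℝ) T, |φ η| ≤ M)
    (s t : ℝ) (hs : 0 ≤ s) (hst : s < t) (ht : t ≤ T)
    (ρ : ℝ → ℝ)
    (hρ : ∀ η : ℝ, 0 ≤ η → η ≠ s → η ≠ t →
      ρ η = H * (Real.sign (t - η) * |t - η| ^ (2 * H - 1)
        - Real.sign (s - η) * |s - η| ^ (2 * H - 1)))
    (hρs : ρ s = 0) (hρt : ρ t = 0) :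
    |∫ η in (0 : ℝ)..T, φ η * ρ η|
      ≤ 2 * (t - s) ^ (2 * H) * sSup ((fun η => |φ η|) '' Set.Icc (0 : ℝ) T) :=
  fbm_density_pairing_bound_general H hH0 hH1 T φ hφb s t hs hst ht ρ hρ
end
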